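/- Let p be a prime with p ≡ 1 (mod 12). Then there are no integers x, y, z with x² + y² + z³ = p³ and z ≡ 6 (mod 12). -/

import Mathlib

/-!
Write `p³ - z³ = (p - z)(p² + pz + z²)`. Since `z ≡ 6` and `p ≡ 1 (mod 12)`, the factor `p - z` is
positive and `≡ 7 (mod 12)`, so some prime `q ≡ 3 (mod 4)` divides it to an odd power. As `p³ - z³`
is a sum of two squares, `q` must also divide the second factor, hence `q ∣ 3p`; but `3 ∤ p - z`
and `p ≡ 1 (mod 4)`.
-/

theorem Nat.sq_add_sq_mod_four_ne_three (x y : ℕ) : (x ^ 2 + y ^ 2) % 4 ≠ 3 := by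
  rw [Nat.add_mod, Nat.pow_mod, Nat.pow_mod y]
  have hx := Nat.mod_lt x (show 4 > 0 by norm_num)
  have hy := Nat.mod_lt y (show 4 > 0 by norm_num)
  interval_cases x % 4 <;> interval_cases y % 4 <;> simp

theorem Nat.exists_prime_mod_four_eq_three_odd_padicValNat {n : ℕ} (hn : n % 4 = 3) :
    ∃ q : ℕ, q.Prime ∧ q % 4 = 3 ∧ Odd (padicValNat q n) := by
  by_contra! h
  obtain ⟨x, y, rfl⟩ : ∃ x y, n = x ^ 2 + y ^ 2 :=
    Nat.eq_sq_add_sq_iff.mpr fun q hq hq4 ↦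
      Nat.not_odd_iff_even.mp (h q (Nat.prime_of_mem_primeFactors hq) hq4)
  exact Nat.sq_add_sq_mod_four_ne_three x y hn

theorem Nat.exists_prime_mod_four_eq_three_dvd_of_mul_eq_sq_add_sq {a b x y : ℕ}
    (ha : a % 4 = 3) (h : a * b = x ^ 2 + y ^ 2) :
    ∃ q : ℕ, q.Prime ∧ q % 4 = 3 ∧ q ∣ a ∧ q ∣ b := by
  obtain ⟨q, hq, hq4, hodd⟩ := Nat.exists_prime_mod_four_eq_three_odd_padicValNat ha
  have : Fact q.Prime := ⟨hq⟩
  have ha0 : a ≠ 0 := by omega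
  refine ⟨q, hq, hq4, dvd_of_one_le_padicValNat hodd.pos, ?_⟩
  by_contra hqb
  have hb0 : b ≠ 0 := by rintro rfl; exact hqb (dvd_zero q)
  have heven : Even (padicValNat q (a * b)) :=
    Nat.eq_sq_add_sq_iff.mp ⟨x, y, h⟩ q
      (Nat.mem_primeFactors.mpr ⟨hq, (dvd_of_one_le_padicValNat hodd.pos).mul_right b,
        mul_ne_zero ha0 hb0⟩) hq4
  rw [padicValNat.mul ha0 hb0, padicValNat.eq_zero_of_not_dvd hqb, add_zero] at heven
  exact Nat.not_odd_iff_even.mpr heven hodd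

theorem Int.exists_prime_mod_four_eq_three_dvd_of_mul_eq_sq_add_sq {a b x y : ℤ}
    (ha₀ : 0 ≤ a) (ha : a % 4 = 3) (h : a * b = x ^ 2 + y ^ 2) :
    ∃ q : ℕ, q.Prime ∧ q % 4 = 3 ∧ (q : ℤ) ∣ a ∧ (q : ℤ) ∣ b := by
  have hb₀ : 0 ≤ b :=
    nonneg_of_mul_nonneg_right (h ▸ by positivity) (lt_of_le_of_ne ha₀ (by omega))
  lift a to ℕ using ha₀
  lift b to ℕ using hb₀
  have h' : a * b = x.natAbs ^ 2 + y.natAbs ^ 2 := by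
    have : ((a * b : ℕ) : ℤ) = ((x.natAbs ^ 2 + y.natAbs ^ 2 : ℕ) : ℤ) := by
      push_cast [sq_abs]
      exact h
    exact_mod_cast this
  obtain ⟨q, hq, hq4, hqa, hqb⟩ :=
    Nat.exists_prime_mod_four_eq_three_dvd_of_mul_eq_sq_add_sq (by omega) h'
  exact ⟨q, hq, hq4, Int.natCast_dvd_natCast.mpr hqa, Int.natCast_dvd_natCast.mpr hqb⟩

theorem Prime.dvd_three_mul_of_dvd_sub_of_dvd_sq_add_mul_add_sq {R : Type*} [CommRing R]
    {q w z : R} (hq : Prime q) (hsub : q ∣ w - z) (hsum : q ∣ w ^ 2 + w * z + z ^ 2) :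
    q ∣ 3 * w := by
  have h3wz : q ∣ 3 * w * z := by
    have : 3 * w * z = (w ^ 2 + w * z + z ^ 2) - (w - z) ^ 2 := by ring
    exact this ▸ dvd_sub hsum (dvd_pow hsub two_ne_zero)
  rcases hq.dvd_mul.mp h3wz with h | hz
  · exact h
  · exact (sub_add_cancel w z ▸ dvd_add hsub hz).mul_left 3

theorem no_rep_k3 (p : ℕ) (hp : p.Prime) (hp1 : (p : ℤ) ≡ 1 [ZMOD 12]) :
    ¬ ∃ x y z : ℤ, z ≡ 6 [ZMOD 12] ∧ x ^ 2 + y ^ 2 + z ^ 3 = (p : ℤ) ^ 3 := by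
  rintro ⟨x, y, z, hz, heq⟩
  rw [Int.ModEq] at hp1 hz
  have hzp : z ≤ p :=
    (Odd.pow_le_pow (by decide : Odd 3)).mp (by linarith [sq_nonneg x, sq_nonneg y])
  obtain ⟨q, hq, hq4, hqa, hqb⟩ :=
    Int.exists_prime_mod_four_eq_three_dvd_of_mul_eq_sq_add_sq (sub_nonneg.mpr hzp)
      (show (p - z) % 4 = 3 by omega)
      (show (p - z) * (p ^ 2 + p * z + z ^ 2) = x ^ 2 + y ^ 2 by linear_combination -heq)
  have hq' := Nat.prime_iff_prime_int.mp hq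
  have hq3p := hq'.dvd_three_mul_of_dvd_sub_of_dvd_sq_add_mul_add_sq hqa hqb
  rcases hq'.dvd_mul.mp hq3p with h3 | hqp
  · obtain rfl : q = 3 := (Nat.prime_dvd_prime_iff_eq hq Nat.prime_three).mp (by exact_mod_cast h3)
    omega
  · obtain rfl : q = p := (Nat.prime_dvd_prime_iff_eq hq hp).mp (by exact_mod_cast hqp)
    omega
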